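/- arXiv:0711.0184 — 4 statements merged into one kernel-verified Lean document; each statement's English description precedes it below -/
import Mathlib

section
/- Let A be an associative unital ℚ-algebra with a central element t such that A is t-adically separated and t-adically complete. Let N ≥ 1 and let P, Q ∈ Mat_N(A) be idempotent matrices (P·P = P and Q·Q = Q) such that every entry of P − Q lies in tA. Then Tr(P) − Tr(Q) lies in the additive subgroup of A generated by the commutators {a·b − b·a : a, b ∈ A}. (In particular, any ℚ-linear functional on A vanishing on all commutators takes the same value on Tr(P) and Tr(Q).) -/
/-!
Set `Z = P * Q + (1 - P) * (1 - Q)`. Then `P * Z = P * Q = Z * Q`, and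
`1 - Z = P * (P - Q) - (P - Q) * Q` lies in `t • Mat_N(A)`. Since `t` is central and `A` is
`t`-adically separated and complete, so is `Mat_N(A)` for the scalar matrix `t`, and the geometric
series shows that `Z` is invertible. Hence `P = Z Q Z⁻¹`, and `Tr(X Y) - Tr(Y X)` is a sum of
commutators.
-/

open Finset

section TAdic

variable {R : Type*} [Ring R]

def IsTAdicSeparated (t : R) : Prop :=
  ∀ a : R, (∀ n : ℕ, ∃ b : R, a = t ^ n * b) → a = 0

def IsTAdicComplete (t : R) : Prop :=
  ∀ s : ℕ → R, (∀ n : ℕ, ∃ b : R, s (n + 1) - s n = t ^ n * b) →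
    ∃ a : R, ∀ n : ℕ, ∃ b : R, a - s n = t ^ n * b

variable {t : R}

theorem isUnit_one_sub_mul_of_isTAdicComplete (ht : ∀ a, Commute t a)
    (hsep : IsTAdicSeparated t) (hcomp : IsTAdicComplete t) (y : R) :
    IsUnit (1 - t * y) := by
  set x := t * y
  have hx_pow (n : ℕ) : x ^ n = t ^ n * y ^ n := (ht y).mul_pow n
  obtain ⟨a, ha⟩ := hcomp (fun n => ∑ k ∈ range n, x ^ k) fun n =>
    ⟨y ^ n, by rw [sum_range_succ, add_sub_cancel_left, hx_pow]⟩
  choose b hb using ha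
  have h_left : a * (1 - x) = 1 := by
    rw [← sub_eq_zero]
    refine hsep _ fun n => ⟨b n * (1 - x) - y ^ n, ?_⟩
    calc a * (1 - x) - 1
        = (a - ∑ k ∈ range n, x ^ k) * (1 - x) - x ^ n := by
          rw [sub_mul, geom_sum_mul_neg]; abel
      _ = t ^ n * (b n * (1 - x) - y ^ n) := by
          rw [hb, hx_pow, mul_assoc, ← mul_sub]
  have h_right : (1 - x) * a = 1 := by
    rw [← sub_eq_zero]
    refine hsep _ fun n => ⟨(1 - x) * b n - y ^ n, ?_⟩
    calc (1 - x) * a - 1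
        = (1 - x) * (a - ∑ k ∈ range n, x ^ k) - x ^ n := by
          rw [mul_sub, mul_neg_geom_sum]; abel
      _ = t ^ n * ((1 - x) * b n - y ^ n) := by
          rw [hb, hx_pow, ← mul_assoc, ← ((ht _).pow_left n).eq, mul_assoc, ← mul_sub]
  exact ⟨⟨1 - x, a, h_right, h_left⟩, rfl⟩

theorem exists_isUnit_mul_eq_mul_of_isIdempotentElem (ht : ∀ a, Commute t a)
    (hsep : IsTAdicSeparated t) (hcomp : IsTAdicComplete t) {P Q : R}
    (hP : IsIdempotentElem P) (hQ : IsIdempotentElem Q) {d : R} (hPQ : P - Q = t * d) :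
    ∃ z : R, IsUnit z ∧ P * z = z * Q := by
  set z := P * Q + (1 - P) * (1 - Q)
  have hz : z = 1 - t * (P * d - d * Q) := by
    have h_one_sub : 1 - z = P * (P - Q) - (P - Q) * Q := by
      simp only [z, mul_sub, sub_mul, hP.eq, hQ.eq, mul_one, one_mul]; abel
    rw [← sub_sub_cancel 1 z, h_one_sub, hPQ, mul_sub, ← mul_assoc, ← (ht P).eq, mul_assoc,
      mul_assoc]
  refine ⟨z, hz ▸ isUnit_one_sub_mul_of_isTAdicComplete ht hsep hcomp _, ?_⟩
  simp only [z, mul_add, add_mul, mul_sub, sub_mul, ← mul_assoc, hP.eq, hQ.eq, mul_assoc P Q Q,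
    mul_one, one_mul]
  abel

end TAdic

def commutatorAddSubgroup (A : Type*) [Ring A] : AddSubgroup A :=
  AddSubgroup.closure {x : A | ∃ a b : A, x = a * b - b * a}

namespace Matrix

variable {n A : Type*} [Fintype n] [Ring A]

theorem trace_mul_sub_trace_mul_mem_commutatorAddSubgroup (X Y : Matrix n n A) :
    trace (X * Y) - trace (Y * X) ∈ commutatorAddSubgroup A := by
  have h_sum : trace (X * Y) - trace (Y * X) = ∑ i, ∑ j, (X i j * Y j i - Y j i * X i j) := by
    simp only [trace, diag, mul_apply, sum_sub_distrib]
    rw [sum_comm (f := fun i j => Y j i * X i j)]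
  rw [h_sum]
  exact AddSubgroup.sum_mem _ fun i _ => AddSubgroup.sum_mem _ fun j _ =>
    AddSubgroup.subset_closure ⟨X i j, Y j i, rfl⟩

variable [DecidableEq n]

theorem trace_sub_trace_mem_commutatorAddSubgroup_of_mul_eq_mul {P Q z : Matrix n n A}
    (hz : IsUnit z) (hPQ : P * z = z * Q) :
    trace P - trace Q ∈ commutatorAddSubgroup A := by
  obtain ⟨u, rfl⟩ := hz
  have h := trace_mul_sub_trace_mul_mem_commutatorAddSubgroup (u.val * Q) u⁻¹.val
  rwa [Units.inv_mul_cancel_left, ← hPQ, Units.mul_inv_cancel_right] at h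

theorem scalar_pow_mul_apply (t : A) (k : ℕ) (M : Matrix n n A) (i j : n) :
    (scalar n t ^ k * M) i j = t ^ k * M i j := by
  rw [← map_pow, scalar_apply, diagonal_mul]

variable {t : A}

theorem isTAdicSeparated_scalar (hsep : IsTAdicSeparated t) :
    IsTAdicSeparated (scalar n t) := by
  intro M hM
  ext i j
  refine hsep _ fun k => ?_
  obtain ⟨B, hB⟩ := hM k
  exact ⟨B i j, by rw [hB, scalar_pow_mul_apply]⟩

theorem isTAdicComplete_scalar (hcomp : IsTAdicComplete t) :
    IsTAdicComplete (scalar n t) := by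
  intro s hs
  choose B hB using hs
  have h_entry (i j : n) := hcomp (fun k => s k i j) fun k =>
    ⟨B k i j, by rw [← sub_apply, hB, scalar_pow_mul_apply]⟩
  choose a b hab using h_entry
  exact ⟨of a, fun k => ⟨of fun i j => b i j k, by
    ext i j; rw [scalar_pow_mul_apply, sub_apply, of_apply, of_apply, hab]⟩⟩

end Matrix

theorem trace_idempotents_congruent_mod_commutators_general
    (A : Type*) [Ring A] (t : A)
    (hcentral : ∀ a : A, t * a = a * t)
    (hsep : ∀ a : A, (∀ n : ℕ, ∃ b : A, a = t ^ n * b) → a = 0)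
    (hcomplete : ∀ s : ℕ → A,
      (∀ n : ℕ, ∃ b : A, s (n + 1) - s n = t ^ n * b) →
      ∃ a : A, ∀ n : ℕ, ∃ b : A, a - s n = t ^ n * b)
    (N : ℕ)
    (P Q : Matrix (Fin N) (Fin N) A)
    (hP : P * P = P) (hQ : Q * Q = Q)
    (hPQ : ∀ i j : Fin N, ∃ b : A, P i j - Q i j = t * b) :
    Matrix.trace P - Matrix.trace Q ∈
      AddSubgroup.closure {x : A | ∃ a b : A, x = a * b - b * a} := by
  choose d hd using hPQ
  have hPQ_scalar : P - Q = Matrix.scalar (Fin N) t * Matrix.of d := by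
    ext i j
    rw [Matrix.sub_apply, ← pow_one (Matrix.scalar (Fin N) t), Matrix.scalar_pow_mul_apply,
      pow_one, Matrix.of_apply, hd]
  obtain ⟨z, hz, hPz⟩ := exists_isUnit_mul_eq_mul_of_isIdempotentElem
    (Matrix.scalar_commute t hcentral) (Matrix.isTAdicSeparated_scalar hsep)
    (Matrix.isTAdicComplete_scalar hcomplete) hP hQ hPQ_scalar
  exact Matrix.trace_sub_trace_mem_commutatorAddSubgroup_of_mul_eq_mul hz hPz

/-- Idempotent matrices over a `t`-adically separated and complete ℚ-algebra whose
entries agree modulo `t` have traces that agree modulo commutators. -/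
theorem trace_idempotents_congruent_mod_commutators
    (A : Type*) [Ring A] [Algebra ℚ A] (t : A)
    (hcentral : ∀ a : A, t * a = a * t)
    (hsep : ∀ a : A, (∀ n : ℕ, ∃ b : A, a = t ^ n * b) → a = 0)
    (hcomplete : ∀ s : ℕ → A,
      (∀ n : ℕ, ∃ b : A, s (n + 1) - s n = t ^ n * b) →
      ∃ a : A, ∀ n : ℕ, ∃ b : A, a - s n = t ^ n * b)
    (N : ℕ) (hN : 1 ≤ N)
    (P Q : Matrix (Fin N) (Fin N) A)
    (hP : P * P = P) (hQ : Q * Q = Q)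
    (hPQ : ∀ i j : Fin N, ∃ b : A, P i j - Q i j = t * b) :
    Matrix.trace P - Matrix.trace Q ∈
      AddSubgroup.closure {x : A | ∃ a b : A, x = a * b - b * a} :=
  trace_idempotents_congruent_mod_commutators_general A t hcentral hsep hcomplete N P Q hP hQ hPQ
end

section
/- Let A be an associative unital ℚ-algebra with a central element t such that A is t-adically separated and t-adically complete. Let q ∈ A satisfy q·q − q ∈ tA. Then the element Q := 1/2 + (q − 1/2)·S, where S is the unique element of A with S − 1 ∈ tA, S·x = x·S, and S·S·(1 + x) = 1 for x := 4·(q·q − q), is a well-defined idempotent: Q·Q = Q, Q − q ∈ tA, and Q·q = q·Q. -/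
/-!
Since `t ∣ x` for `x = 4 (q² - q)`, Newton's iteration `s ↦ s - s e / 2` for `(1 + x)^{-1/2}`,
started at `1`, turns the error `e = s² (1 + x) - 1` into `e² (e - 3) / 4`. Its iterates are
polynomials in `x` with error divisible by `t^(n+1)`, and their `t`-adic limit is the required
`S`. Square roots congruent to `1` modulo `t` are unique because `2` is invertible. As `q` and `S`
commute and `(q - 1/2)² = (1 + x) / 4`, the element `(q - 1/2) S` squares to `1/4`, so
`Q = 1/2 + (q - 1/2) S` is idempotent.
-/

open Polynomial

noncomputable def invSqrtNewton : ℕ → ℚ[X]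
  | 0 => 1
  | n + 1 => invSqrtNewton n - C (1 / 2) * invSqrtNewton n * (invSqrtNewton n ^ 2 * (1 + X) - 1)

theorem X_pow_dvd_invSqrtNewton_sq_mul_sub_one (n : ℕ) :
    X ^ (n + 1) ∣ invSqrtNewton n ^ 2 * (1 + X) - 1 := by
  induction n with
  | zero => simp [invSqrtNewton]
  | succ n ih =>
    set e := invSqrtNewton n ^ 2 * (1 + X) - 1
    have hC : C (1 / 2 : ℚ) * 2 = 1 := by
      rw [← C_ofNat, ← C_mul]; norm_num
    have hsucc : invSqrtNewton (n + 1) ^ 2 * (1 + X) - 1 = e ^ 2 * (C (1 / 2) ^ 2 * (e - 3)) := by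
      rw [invSqrtNewton]
      linear_combination (2 * C (1 / 2) * e ^ 2 - e) * hC
    rw [hsucc]
    refine dvd_mul_of_dvd_left ((pow_dvd_pow X (by omega : n + 1 + 1 ≤ (n + 1) * 2)).trans ?_) _
    rw [pow_mul]
    exact pow_dvd_pow_of_dvd ih 2

theorem X_pow_dvd_invSqrtNewton_succ_sub (n : ℕ) :
    X ^ (n + 1) ∣ invSqrtNewton (n + 1) - invSqrtNewton n := by
  rw [invSqrtNewton, sub_sub_cancel_left, dvd_neg]
  exact dvd_mul_of_dvd_right (X_pow_dvd_invSqrtNewton_sq_mul_sub_one n) _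

theorem Polynomial.commute_aeval {R A : Type*} [CommSemiring R] [Semiring A] [Algebra R A]
    {x y : A} (h : Commute x y) (p : R[X]) : Commute (aeval x p) y := by
  induction p using Polynomial.induction_on' with
  | add p r hp hr => simpa using hp.add_left hr
  | monomial n c =>
    simpa [aeval_monomial] using (Algebra.commute_algebraMap_left c y).mul_left (h.pow_left n)

section Monoid

variable {M : Type*} [Monoid M]

theorem dvd_mul_left_of_commute {t a : M} (ht : ∀ c, Commute t c) (h : t ∣ a) (c : M) :
    t ∣ c * a := by
  obtain ⟨b, rfl⟩ := h
  exact ⟨c * b, by rw [← mul_assoc, ← (ht c).eq, mul_assoc]⟩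

theorem pow_dvd_pow_of_dvd_of_commute {t x : M} (ht : ∀ c, Commute t c) (h : t ∣ x) (n : ℕ) :
    t ^ n ∣ x ^ n := by
  obtain ⟨b, rfl⟩ := h
  rw [(ht b).mul_pow]
  exact dvd_mul_right _ _

theorem pow_add_dvd_mul_of_commute {t a b : M} (ht : ∀ c, Commute t c) {m n : ℕ}
    (ha : t ^ m ∣ a) (hb : t ^ n ∣ b) : t ^ (m + n) ∣ a * b := by
  obtain ⟨a, rfl⟩ := ha
  obtain ⟨b, rfl⟩ := hb
  exact ⟨a * b, by rw [((ht a).pow_left n).symm.mul_mul_mul_comm, pow_add]⟩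

end Monoid

section TAdic

variable {A : Type*} [Ring A]

def TAdicSeparated (t : A) : Prop :=
  ∀ a : A, (∀ n : ℕ, t ^ n ∣ a) → a = 0

def TAdicComplete (t : A) : Prop :=
  ∀ s : ℕ → A, (∀ n : ℕ, t ^ n ∣ s (n + 1) - s n) → ∃ a : A, ∀ n : ℕ, t ^ n ∣ a - s n

theorem dvd_mul_sub_mul_of_commute {t a a' b b' : A} (ht : ∀ c, Commute t c)
    (ha : t ∣ a - a') (hb : t ∣ b - b') : t ∣ a * b - a' * b' := by
  rw [show a * b - a' * b' = (a - a') * b + a' * (b - b') by noncomm_ring]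
  exact dvd_add (ha.mul_right b) (dvd_mul_left_of_commute ht hb a')

namespace TAdicSeparated

variable {t : A}

theorem eq_of_forall_dvd_sub (hsep : TAdicSeparated t) {a b : A} (h : ∀ n, t ^ n ∣ a - b) :
    a = b :=
  sub_eq_zero.mp (hsep _ h)

theorem commute_of_forall_dvd_sub (hsep : TAdicSeparated t) (ht : ∀ c, Commute t c)
    {s : ℕ → A} {a y : A} (hs : ∀ n, t ^ n ∣ a - s n) (hy : ∀ n, Commute (s n) y) :
    Commute a y := by
  refine hsep.eq_of_forall_dvd_sub fun n => ?_
  have ht' : ∀ c, Commute (t ^ n) c := fun c => (ht c).pow_left n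
  have hright := dvd_mul_sub_mul_of_commute ht' (hs n) (sub_self y ▸ dvd_zero _)
  have hleft := dvd_mul_sub_mul_of_commute ht' (sub_self y ▸ dvd_zero _) (hs n)
  simpa [(hy n).eq] using dvd_sub hright hleft

theorem eq_of_mul_self_eq_mul_self [Algebra ℚ A] (hsep : TAdicSeparated t)
    (ht : ∀ c, Commute t c) {S₁ S₂ : A} (h₁ : t ∣ S₁ - 1) (h₂ : t ∣ S₂ - 1)
    (h : S₁ * S₁ = S₂ * S₂) : S₁ = S₂ := by
  refine hsep.eq_of_forall_dvd_sub fun n => ?_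
  induction n with
  | zero => simp
  | succ n ih =>
    -- `S₁ D + D S₂ = S₁² - S₂² = 0` for `D = S₁ - S₂`, so `2 D = -((S₁ - 1) D + D (S₂ - 1))`.
    have htwice : (S₁ - S₂) + (S₁ - S₂) = -((S₁ - 1) * (S₁ - S₂) + (S₁ - S₂) * (S₂ - 1)) := by
      rw [eq_neg_iff_add_eq_zero, ← sub_eq_zero_of_eq h]
      noncomm_ring
    have hhalf : S₁ - S₂ = algebraMap ℚ A (1 / 2) * ((S₁ - S₂) + (S₁ - S₂)) := by
      rw [← two_mul, ← mul_assoc, ← map_ofNat (algebraMap ℚ A) 2, ← map_mul]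
      norm_num
    rw [← pow_one t] at h₁ h₂
    rw [hhalf, htwice]
    refine dvd_mul_left_of_commute (fun c => (ht c).pow_left _) (dvd_neg.mpr (dvd_add ?_ ?_)) _
    · simpa [add_comm] using pow_add_dvd_mul_of_commute ht h₁ ih
    · exact pow_add_dvd_mul_of_commute ht ih h₂

theorem eq_of_mul_self_mul_one_add_eq_one [Algebra ℚ A] (hsep : TAdicSeparated t)
    (ht : ∀ c, Commute t c) {x S₁ S₂ : A} (h₁ : t ∣ S₁ - 1) (h₂ : t ∣ S₂ - 1)
    (hS₂x : Commute S₂ x) (hS₁ : S₁ * S₁ * (1 + x) = 1) (hS₂ : S₂ * S₂ * (1 + x) = 1) :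
    S₁ = S₂ := by
  have hS₂' : Commute S₂ (1 + x) := (Commute.one_right S₂).add_right hS₂x
  exact hsep.eq_of_mul_self_eq_mul_self ht h₁ h₂
    (left_inv_eq_right_inv hS₁ ((hS₂'.mul_left hS₂').symm.eq.trans hS₂))

end TAdicSeparated

end TAdic

theorem exists_mul_self_mul_one_add_eq_one {A : Type*} [Ring A] [Algebra ℚ A] {t x : A}
    (ht : ∀ c, Commute t c) (hsep : TAdicSeparated t) (hcomplete : TAdicComplete t)
    (hx : t ∣ x) :
    ∃ S : A, t ∣ S - 1 ∧ S * S * (1 + x) = 1 ∧ ∀ y, Commute x y → Commute S y := by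
  set s : ℕ → A := fun n => aeval x (invSqrtNewton n)
  have heval : ∀ {p : ℚ[X]} {n : ℕ}, X ^ n ∣ p → t ^ n ∣ aeval x p := fun hp =>
    (pow_dvd_pow_of_dvd_of_commute ht hx _).trans (by simpa using map_dvd (aeval x) hp)
  have hstep : ∀ n, t ^ (n + 1) ∣ s (n + 1) - s n := fun n => by
    simpa [s] using heval (X_pow_dvd_invSqrtNewton_succ_sub n)
  have herror : ∀ n, t ^ (n + 1) ∣ s n * s n * (1 + x) - 1 := fun n => by
    simpa [s, pow_two] using heval (X_pow_dvd_invSqrtNewton_sq_mul_sub_one n)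
  obtain ⟨S, hS⟩ := hcomplete s fun n => (pow_dvd_pow t n.le_succ).trans (hstep n)
  refine ⟨S, ?_, ?_, fun y hy => hsep.commute_of_forall_dvd_sub ht hS fun n => ?_⟩
  · have hs0 : s 0 = 1 := by simp [s, invSqrtNewton]
    simpa [hs0] using dvd_add (hS 1) (hstep 0)
  · refine hsep.eq_of_forall_dvd_sub fun n => ?_
    have ht' : ∀ c, Commute (t ^ n) c := fun c => (ht c).pow_left n
    have hlim := dvd_mul_sub_mul_of_commute ht' (dvd_mul_sub_mul_of_commute ht' (hS n) (hS n))
      (sub_self (1 + x) ▸ dvd_zero _)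
    simpa using dvd_add hlim ((pow_dvd_pow t n.le_succ).trans (herror n))
  · exact commute_aeval hy _

theorem isIdempotentElem_half_add_sub_half_mul_of_comm {R : Type*} [CommRing R] [Algebra ℚ R]
    {q S : R} (hS : S * S * (1 + 4 * (q * q - q)) = 1) :
    IsIdempotentElem (algebraMap ℚ R (1 / 2) + (q - algebraMap ℚ R (1 / 2)) * S) := by
  set h := algebraMap ℚ R (1 / 2)
  have h2 : h * 2 = 1 := by
    rw [← map_ofNat (algebraMap ℚ R) 2, ← map_mul]; norm_num
  unfold IsIdempotentElem
  linear_combination (h * h) * hS +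
    (h + (q - h) * S - (1 + 2 * h) * q ^ 2 * S ^ 2 + 2 * h * q * S ^ 2) * h2

open scoped IsMulCommutative in
theorem isIdempotentElem_half_add_sub_half_mul {A : Type*} [Ring A] [Algebra ℚ A] {q S : A}
    (hqS : Commute q S) (hS : S * S * (1 + 4 * (q * q - q)) = 1) :
    IsIdempotentElem (algebraMap ℚ A (1 / 2) + (q - algebraMap ℚ A (1 / 2)) * S) := by
  have : IsMulCommutative (Algebra.adjoin ℚ {q, S}) := Algebra.isMulCommutative_adjoin ℚ (by
    simp only [Set.mem_insert_iff, Set.mem_singleton_iff]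
    rintro a (rfl | rfl) b (rfl | rfl) <;> first | rfl | exact hqS.eq | exact hqS.eq.symm)
  let q' : Algebra.adjoin ℚ {q, S} := ⟨q, Algebra.subset_adjoin (by simp)⟩
  let S' : Algebra.adjoin ℚ {q, S} := ⟨S, Algebra.subset_adjoin (by simp)⟩
  exact (isIdempotentElem_half_add_sub_half_mul_of_comm (q := q') (S := S') (Subtype.ext hS)).map
    (Algebra.adjoin ℚ {q, S}).val

/-- Fedosov's idempotent-lifting formula: if `q * q - q ∈ tA` then
`Q = 1/2 + (q - 1/2) * (1 + 4(q*q - q))^{-1/2}` is a well-defined idempotent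
congruent to `q` modulo `t` and commuting with `q`. -/
theorem idempotent_lift_formula
    (A : Type*) [Ring A] [Algebra ℚ A] (t : A)
    (hcentral : ∀ a : A, t * a = a * t)
    (hsep : ∀ a : A, (∀ n : ℕ, ∃ b : A, a = t ^ n * b) → a = 0)
    (hcomplete : ∀ s : ℕ → A,
      (∀ n : ℕ, ∃ b : A, s (n + 1) - s n = t ^ n * b) →
      ∃ a : A, ∀ n : ℕ, ∃ b : A, a - s n = t ^ n * b)
    (q : A) (hq : ∃ b : A, q * q - q = t * b) :
    (∃! S : A,
        (∃ b : A, S - 1 = t * b) ∧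
        S * (4 * (q * q - q)) = (4 * (q * q - q)) * S ∧
        S * S * (1 + 4 * (q * q - q)) = 1) ∧
    (∀ S : A,
        ((∃ b : A, S - 1 = t * b) ∧
          S * (4 * (q * q - q)) = (4 * (q * q - q)) * S ∧
          S * S * (1 + 4 * (q * q - q)) = 1) →
        (algebraMap ℚ A (1/2) + (q - algebraMap ℚ A (1/2)) * S) *
            (algebraMap ℚ A (1/2) + (q - algebraMap ℚ A (1/2)) * S) =
          algebraMap ℚ A (1/2) + (q - algebraMap ℚ A (1/2)) * S ∧
        (∃ b : A, (algebraMap ℚ A (1/2) + (q - algebraMap ℚ A (1/2)) * S) - q = t * b) ∧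
        (algebraMap ℚ A (1/2) + (q - algebraMap ℚ A (1/2)) * S) * q =
          q * (algebraMap ℚ A (1/2) + (q - algebraMap ℚ A (1/2)) * S)) := by
  obtain ⟨S, hS1, hSinv, hScomm⟩ := exists_mul_self_mul_one_add_eq_one hcentral hsep hcomplete
    (dvd_mul_left_of_commute hcentral hq 4)
  have hSx : Commute S (4 * (q * q - q)) := hScomm _ (Commute.refl _)
  have hSq : Commute S q := hScomm q
    ((Commute.ofNat_left 4 q).mul_left
      (((Commute.refl q).mul_left (Commute.refl q)).sub_left (Commute.refl q)))
  have huniq : ∀ S', (t ∣ S' - 1 ∧ Commute S' (4 * (q * q - q)) ∧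
      S' * S' * (1 + 4 * (q * q - q)) = 1) → S' = S := fun S' hS' =>
    TAdicSeparated.eq_of_mul_self_mul_one_add_eq_one hsep hcentral hS'.1 hS1 hSx hS'.2.2 hSinv
  refine ⟨⟨S, ⟨hS1, hSx, hSinv⟩, huniq⟩, fun S' hS' => ?_⟩
  obtain rfl := huniq S' hS'
  have hhalf : Commute (algebraMap ℚ A (1 / 2)) q := Algebra.commute_algebraMap_left _ q
  refine ⟨isIdempotentElem_half_add_sub_half_mul hSq.symm hSinv, ?_,
    hhalf.add_left (((Commute.refl q).sub_left hhalf).mul_left hSq)⟩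
  rw [show algebraMap ℚ A (1 / 2) + (q - algebraMap ℚ A (1 / 2)) * S' - q =
    (q - algebraMap ℚ A (1 / 2)) * (S' - 1) by noncomm_ring]
  exact dvd_mul_left_of_commute hcentral hS1 _
end

section
/- Let K be a commutative ℚ-algebra and let A be an associative unital K-algebra with a central element t such that A is t-adically separated and t-adically complete. Let P, Q ∈ A satisfy P·P = P, Q·Q = Q and P − Q ∈ tA. Then there exists a family (P_c)_{c ∈ K} of elements of A such that for every c ∈ K one has P_c·P_c = P_c and P_c − ((1 − c)·P + c·Q) ∈ tA, and moreover P_0 = P and P_1 = Q. -/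
/-- The path of idempotents `P_c = 1/2 + (P⁰_c - 1/2)(1 + 4(P⁰_c² - P⁰_c))^{-1/2}`,
with `P⁰_c = (1-c)P + cQ`, connecting two idempotents `P`, `Q` congruent modulo `t`. -/
theorem path_of_idempotents
    (K : Type*) [CommRing K] [Algebra ℚ K]
    (A : Type*) [Ring A] [Algebra K A] (t : A)
    (hcentral : ∀ a : A, t * a = a * t)
    (hsep : ∀ a : A, (∀ n : ℕ, ∃ b : A, a = t ^ n * b) → a = 0)
    (hcomplete : ∀ s : ℕ → A,
      (∀ n : ℕ, ∃ b : A, s (n + 1) - s n = t ^ n * b) →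
      ∃ a : A, ∀ n : ℕ, ∃ b : A, a - s n = t ^ n * b)
    (P Q : A) (hP : P * P = P) (hQ : Q * Q = Q)
    (hPQ : ∃ b : A, P - Q = t * b) :
    ∃ f : K → A,
      (∀ c : K, f c * f c = f c ∧
        ∃ b : A, f c - (((1 : K) - c) • P + c • Q) = t * b) ∧
      f 0 = P ∧ f 1 = Q := by
  classical
  -- divisibility predicate
  set D : ℕ → A → Prop := fun n a => ∃ b : A, a = t ^ n * b with hD
  have hmove : ∀ (m : ℕ) (x y : A), x * (t ^ m * y) = t ^ m * (x * y) := by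
    intro m x y
    have c : Commute t x := hcentral x
    rw [← mul_assoc, ← (c.pow_left m).eq, mul_assoc]
  have DmulL : ∀ (n : ℕ) (x a : A), D n a → D n (x * a) := by
    rintro n x a ⟨b, rfl⟩; exact ⟨x * b, (hmove n x b)⟩
  have DmulR : ∀ (n : ℕ) (a x : A), D n a → D n (a * x) := by
    rintro n a x ⟨b, rfl⟩; exact ⟨b * x, (mul_assoc _ _ _)⟩
  have Dadd : ∀ (n : ℕ) (a a' : A), D n a → D n a' → D n (a + a') := by
    rintro n a a' ⟨b, rfl⟩ ⟨b', rfl⟩; exact ⟨b + b', (mul_add _ _ _).symm⟩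
  have Dsub : ∀ (n : ℕ) (a a' : A), D n a → D n a' → D n (a - a') := by
    rintro n a a' ⟨b, rfl⟩ ⟨b', rfl⟩; exact ⟨b - b', (mul_sub _ _ _).symm⟩
  have Dmul : ∀ (m n : ℕ) (a a' : A), D m a → D n a' → D (m + n) (a * a') := by
    rintro m n a a' ⟨b, rfl⟩ ⟨b', rfl⟩
    exact ⟨b * b', by rw [mul_assoc, hmove n b b', ← mul_assoc, ← pow_add]⟩
  have Dmono : ∀ (m n : ℕ) (a : A), m ≤ n → D n a → D m a := by
    rintro m n a h ⟨b, rfl⟩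
    exact ⟨t ^ (n - m) * b, by rw [← mul_assoc, ← pow_add, Nat.add_sub_cancel' h]⟩
  -- the Newton map
  let g : A → A := fun e => 3 * e ^ 2 - 2 * e ^ 3
  have hId1 : ∀ e : A, g e - e = (1 - 2 * e) * (e * e - e) := by
    intro e; show 3 * e ^ 2 - 2 * e ^ 3 - e = _; noncomm_ring
  have hId2 : ∀ e : A,
      g e * g e - g e = (e * e - e) * (e * e - e) * (4 * (e * e - e) - 3) := by
    intro e
    show (3 * e ^ 2 - 2 * e ^ 3) * (3 * e ^ 2 - 2 * e ^ 3) - (3 * e ^ 2 - 2 * e ^ 3) = _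
    noncomm_ring
  have hgfix : ∀ e : A, e * e = e → g e = e := by
    intro e he
    show 3 * e ^ 2 - 2 * e ^ 3 = e
    have h2 : e ^ 2 = e := by rw [sq, he]
    have h3 : e ^ 3 = e := by rw [pow_succ, h2, he]
    rw [h2, h3]; noncomm_ring
  -- the initial point
  let P0 : K → A := fun c => ((1 : K) - c) • P + c • Q
  obtain ⟨b₀, hb₀⟩ := hPQ
  have hP0 : ∀ c : K, P0 c = P - t * (c • b₀) := by
    intro c
    have : P0 c = P - c • (P - Q) := by
      show ((1 : K) - c) • P + c • Q = _
      rw [sub_smul, one_smul, smul_sub]; abel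
    rw [this, hb₀, mul_smul_comm]
  have hbase : ∀ c : K, D 1 (P0 c * P0 c - P0 c) := by
    intro c
    set u : A := t * (c • b₀) with hu
    have hDu : D 1 u := ⟨c • b₀, by rw [pow_one]⟩
    have key : P0 c * P0 c - P0 c = u - P * u - u * P + u * u + (P * P - P) := by
      rw [hP0 c, ← hu]; noncomm_ring
    rw [key, hP, sub_self, add_zero]
    exact Dadd _ _ _ (Dsub _ _ _ (Dsub _ _ _ hDu (DmulL _ _ _ hDu)) (DmulR _ _ _ hDu))
      (DmulL _ _ _ hDu)
  -- the sequence
  let s : K → ℕ → A := fun c n => g^[n] (P0 c)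
  have hs0 : ∀ c, s c 0 = P0 c := fun c => rfl
  have hssucc : ∀ c n, s c (n + 1) = g (s c n) := by
    intro c n; exact Function.iterate_succ_apply' g n (P0 c)
  have hsn : ∀ c n, D (n + 1) (s c n * s c n - s c n) := by
    intro c n
    induction n with
    | zero => rw [hs0]; exact hbase c
    | succ n ih =>
      rw [hssucc, hId2]
      have h2 : D (n + 1 + (n + 1)) ((s c n * s c n - s c n) * (s c n * s c n - s c n)) :=
        Dmul _ _ _ _ ih ih
      exact Dmono _ _ _ (by omega) (DmulR _ _ _ h2)
  have hdiff : ∀ c n, D (n + 1) (s c (n + 1) - s c n) := by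
    intro c n
    rw [hssucc, hId1]
    exact DmulL _ _ _ (hsn c n)
  have hdiff' : ∀ c n, D n (s c (n + 1) - s c n) :=
    fun c n => Dmono _ _ _ (Nat.le_succ n) (hdiff c n)
  -- the limit
  choose f hf using fun c : K => hcomplete (s c) (hdiff' c)
  refine ⟨f, ?_, ?_, ?_⟩
  · intro c
    constructor
    · have hzero : f c * f c - f c = 0 := by
        apply hsep
        intro n
        have da : D n (f c - s c n) := hf c n
        have ds : D n (s c n * s c n - s c n) := Dmono _ _ _ (Nat.le_succ n) (hsn c n)
        have key : f c * f c - f c =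
            (f c - s c n) * f c + s c n * (f c - s c n) + (s c n * s c n - s c n)
              - (f c - s c n) := by noncomm_ring
        rw [key]
        exact Dsub _ _ _ (Dadd _ _ _ (Dadd _ _ _ (DmulR _ _ _ da) (DmulL _ _ _ da)) ds) da
      linear_combination (norm := noncomm_ring) hzero
    · have h1 : D 1 (f c - s c 1) := hf c 1
      have h2 : D 1 (s c 1 - s c 0) := hdiff c 0
      have h3 : D 1 (f c - P0 c) := by
        have : f c - P0 c = (f c - s c 1) + (s c 1 - s c 0) := by rw [hs0]; abel
        rw [this]; exact Dadd _ _ _ h1 h2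
      obtain ⟨b, hb⟩ := h3
      exact ⟨b, by rw [← pow_one t]; exact hb⟩
  · -- f 0 = P
    have hP0' : P0 0 = P := by simp [P0]
    have hconst : ∀ n, s 0 n = P := by
      intro n
      induction n with
      | zero => rw [hs0, hP0']
      | succ n ih => rw [hssucc, ih, hgfix P hP]
    have : f 0 - P = 0 := by
      apply hsep; intro n
      have := hf 0 n; rw [hconst n] at this; exact this
    exact sub_eq_zero.mp this
  · have hP1 : P0 1 = Q := by simp [P0]
    have hconst : ∀ n, s 1 n = Q := by
      intro n
      induction n with
      | zero => rw [hs0, hP1]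
      | succ n ih => rw [hssucc, ih, hgfix Q hQ]
    have : f 1 - Q = 0 := by
      apply hsep; intro n
      have := hf 1 n; rw [hconst n] at this; exact this
    exact sub_eq_zero.mp this
end

section
/- Let A be an associative unital ℚ-algebra with a central element t such that A is t-adically separated and t-adically complete, and let τ : A → A be a ring automorphism with τ(t) = t and τ(a) − a ∈ tA for all a ∈ A. Let N ≥ 1 and let P ∈ Mat_N(A) be an idempotent matrix (P·P = P), and let τ(P) ∈ Mat_N(A) be obtained by applying τ entrywise. Then Tr(τ(P)) − Tr(P) lies in the additive subgroup of A generated by the commutators {a·b − b·a : a, b ∈ A}. -/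
/-!
The matrix `u = Q P + (1 - Q)(1 - P)` intertwines two idempotents, `u P = Q u`, and
`1 - u` is divisible by `t` as soon as `Q - P` is. Over a `t`-adically separated and complete
ring the geometric series `∑ (1 - u)ⁿ` then converges to an inverse of `u`, so `Q = u P u⁻¹`
and `Tr Q - Tr P = Tr (u · P u⁻¹) - Tr (P u⁻¹ · u)` is a sum of commutators. Applied with
`Q = τ(P)`, this uses that the matrix ring is separated and complete for the central scalar `t`.
-/

open Matrix

section AdicRing

variable {R : Type*} [Ring R]

def IsAdicSeparatedBy (t : R) : Prop :=
  ∀ a : R, (∀ n : ℕ, t ^ n ∣ a) → a = 0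

def IsAdicCompleteBy (t : R) : Prop :=
  ∀ s : ℕ → R, (∀ n : ℕ, t ^ n ∣ s (n + 1) - s n) → ∃ a : R, ∀ n : ℕ, t ^ n ∣ a - s n

theorem dvd_mul_left_of_commute_s5 {c : R} (hc : ∀ a : R, Commute c a) {x : R} (y : R)
    (h : c ∣ x) : c ∣ y * x := by
  obtain ⟨b, rfl⟩ := h
  exact ⟨y * b, by rw [← mul_assoc, ← (hc y).eq, mul_assoc]⟩

theorem pow_dvd_pow_of_dvd_of_commute_s5 {t : R} (ht : ∀ a : R, Commute t a) {v : R}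
    (hv : t ∣ v) (n : ℕ) : t ^ n ∣ v ^ n := by
  obtain ⟨b, rfl⟩ := hv
  exact ⟨b ^ n, (ht b).mul_pow n⟩

theorem eq_of_forall_pow_dvd_sub {t : R} (hsep : IsAdicSeparatedBy t) {x y : R}
    (h : ∀ n : ℕ, t ^ n ∣ x - y) : x = y :=
  sub_eq_zero.1 (hsep _ h)

theorem isUnit_one_sub_of_dvd {t : R} (ht : ∀ a : R, Commute t a)
    (hsep : IsAdicSeparatedBy t) (hcomplete : IsAdicCompleteBy t) {v : R} (hv : t ∣ v) :
    IsUnit (1 - v) := by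
  have hpow : ∀ n, t ^ n ∣ v ^ n := pow_dvd_pow_of_dvd_of_commute_s5 ht hv
  obtain ⟨a, ha⟩ := hcomplete (fun n => ∑ i ∈ Finset.range n, v ^ i) fun n => by
    simpa [Finset.sum_range_succ] using hpow n
  have hleft : a * (1 - v) = 1 := eq_of_forall_pow_dvd_sub hsep fun n => by
    have : a * (1 - v) - 1 = (a - ∑ i ∈ Finset.range n, v ^ i) * (1 - v) - v ^ n := by
      rw [sub_mul, geom_sum_mul_neg]; abel
    rw [this]
    exact dvd_sub ((ha n).mul_right _) (hpow n)
  have hright : (1 - v) * a = 1 := eq_of_forall_pow_dvd_sub hsep fun n => by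
    have : (1 - v) * a - 1 = (1 - v) * (a - ∑ i ∈ Finset.range n, v ^ i) - v ^ n := by
      rw [mul_sub, mul_neg_geom_sum]; abel
    rw [this]
    exact dvd_sub (dvd_mul_left_of_commute_s5 (fun b => (ht b).pow_left n) _ (ha n)) (hpow n)
  exact ⟨⟨1 - v, a, hright, hleft⟩, rfl⟩

namespace Matrix

variable {n : Type*} [Fintype n]

theorem trace_mul_sub_trace_mul_mem_closure_commutators (X Y : Matrix n n R) :
    trace (X * Y) - trace (Y * X) ∈
      AddSubgroup.closure {x : R | ∃ a b : R, x = a * b - b * a} := by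
  have hsum : trace (X * Y) - trace (Y * X) = ∑ i, ∑ j, (X i j * Y j i - Y j i * X i j) := by
    simp only [trace, diag, mul_apply, Finset.sum_sub_distrib]
    rw [Finset.sum_comm (f := fun i j => Y i j * X j i)]
  rw [hsum]
  exact AddSubgroup.sum_mem _ fun i _ => AddSubgroup.sum_mem _ fun j _ =>
    AddSubgroup.subset_closure ⟨_, _, rfl⟩

variable [DecidableEq n]

theorem scalar_dvd_iff {c : R} {X : Matrix n n R} : scalar n c ∣ X ↔ ∀ i j, c ∣ X i j := by
  constructor
  · rintro ⟨B, rfl⟩ i j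
    exact ⟨B i j, by simp [scalar_apply, diagonal_mul]⟩
  · intro h
    choose B hB using h
    exact ⟨of B, by ext i j; simp [scalar_apply, diagonal_mul, hB i j]⟩

theorem scalar_pow_dvd_iff {t : R} (k : ℕ) {X : Matrix n n R} :
    scalar n t ^ k ∣ X ↔ ∀ i j, t ^ k ∣ X i j := by
  rw [← map_pow, scalar_dvd_iff]

theorem isAdicSeparatedBy_scalar {t : R} (hsep : IsAdicSeparatedBy t) :
    IsAdicSeparatedBy (scalar n t) := fun X hX => by
  ext i j
  exact hsep _ fun k => (scalar_pow_dvd_iff k).1 (hX k) i j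

theorem isAdicCompleteBy_scalar {t : R} (hcomplete : IsAdicCompleteBy t) :
    IsAdicCompleteBy (scalar n t) := fun s hs => by
  have hentry : ∀ i j, ∃ a : R, ∀ k, t ^ k ∣ a - s k i j := fun i j =>
    hcomplete (fun k => s k i j) fun k => (scalar_pow_dvd_iff k).1 (hs k) i j
  choose a ha using hentry
  exact ⟨of a, fun k => (scalar_pow_dvd_iff k).2 fun i j => ha i j k⟩

theorem trace_sub_trace_mem_closure_commutators_of_mul_eq_mul {P Q u : Matrix n n R}
    (hu : IsUnit u) (hconj : u * P = Q * u) :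
    trace Q - trace P ∈ AddSubgroup.closure {x : R | ∃ a b : R, x = a * b - b * a} := by
  obtain ⟨⟨u, v, huv, hvu⟩, rfl⟩ := hu
  have hQ : Q = u * (P * v) := by rw [← mul_assoc, hconj, mul_assoc, huv, mul_one]
  have hP : P = P * v * u := by rw [mul_assoc, hvu, mul_one]
  have h := trace_mul_sub_trace_mul_mem_closure_commutators u (P * v)
  rwa [← hQ, ← hP] at h

end Matrix

section Idempotent

variable {P Q : R}

def intertwiner (P Q : R) : R :=
  Q * P + (1 - Q) * (1 - P)

theorem intertwiner_mul (hP : IsIdempotentElem P) (hQ : IsIdempotentElem Q) :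
    intertwiner P Q * P = Q * intertwiner P Q := by
  have hP' : (1 - P) * P = 0 := by rw [sub_mul, one_mul, hP.eq, sub_self]
  have hQ' : Q * (1 - Q) = 0 := by rw [mul_sub, mul_one, hQ.eq, sub_self]
  calc intertwiner P Q * P = Q * (P * P) + (1 - Q) * ((1 - P) * P) := by
        simp only [intertwiner, add_mul, mul_assoc]
    _ = Q * Q * P + Q * (1 - Q) * (1 - P) := by rw [hP.eq, hP', hQ.eq, hQ', mul_zero, zero_mul]
    _ = Q * intertwiner P Q := by simp only [intertwiner, mul_add, mul_assoc]

theorem dvd_one_sub_intertwiner (hP : IsIdempotentElem P) {c : R} (h : c ∣ Q - P) :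
    c ∣ 1 - intertwiner P Q := by
  have : 1 - intertwiner P Q = (Q - P) - (Q - P) * P - (Q - P) * P := by
    simp only [intertwiner, sub_mul, hP.eq]
    noncomm_ring
  rw [this]
  exact dvd_sub (dvd_sub h (h.mul_right _)) (h.mul_right _)

end Idempotent

end AdicRing

theorem trace_invariant_under_automorphism_trivial_mod_t_general
    (A : Type*) [Ring A] (t : A)
    (hcentral : ∀ a : A, t * a = a * t)
    (hsep : ∀ a : A, (∀ n : ℕ, ∃ b : A, a = t ^ n * b) → a = 0)
    (hcomplete : ∀ s : ℕ → A,
      (∀ n : ℕ, ∃ b : A, s (n + 1) - s n = t ^ n * b) →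
      ∃ a : A, ∀ n : ℕ, ∃ b : A, a - s n = t ^ n * b)
    (τ : A ≃+* A)
    (hτ : ∀ a : A, ∃ b : A, τ a - a = t * b)
    (N : ℕ)
    (P : Matrix (Fin N) (Fin N) A) (hP : P * P = P) :
    Matrix.trace (P.map τ) - Matrix.trace P ∈
      AddSubgroup.closure {x : A | ∃ a b : A, x = a * b - b * a} := by
  have hτP : IsIdempotentElem (P.map τ) := IsIdempotentElem.map hP (τ : A →+* A).mapMatrix
  have hdvd : scalar (Fin N) t ∣ P.map τ - P :=
    scalar_dvd_iff.2 fun i j => hτ (P i j)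
  have hunit : IsUnit (intertwiner P (P.map τ)) := by
    simpa only [sub_sub_cancel] using isUnit_one_sub_of_dvd (scalar_commute t hcentral)
      (isAdicSeparatedBy_scalar hsep) (isAdicCompleteBy_scalar hcomplete)
      (dvd_one_sub_intertwiner hP hdvd)
  exact trace_sub_trace_mem_closure_commutators_of_mul_eq_mul hunit (intertwiner_mul hP hτP)

/-- An automorphism of a `t`-adically separated and complete ℚ-algebra which is trivial
modulo `t` does not change the trace of an idempotent matrix modulo commutators. -/
theorem trace_invariant_under_automorphism_trivial_mod_t
    (A : Type*) [Ring A] [Algebra ℚ A] (t : A)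
    (hcentral : ∀ a : A, t * a = a * t)
    (hsep : ∀ a : A, (∀ n : ℕ, ∃ b : A, a = t ^ n * b) → a = 0)
    (hcomplete : ∀ s : ℕ → A,
      (∀ n : ℕ, ∃ b : A, s (n + 1) - s n = t ^ n * b) →
      ∃ a : A, ∀ n : ℕ, ∃ b : A, a - s n = t ^ n * b)
    (τ : A ≃+* A) (hτt : τ t = t)
    (hτ : ∀ a : A, ∃ b : A, τ a - a = t * b)
    (N : ℕ) (hN : 1 ≤ N)
    (P : Matrix (Fin N) (Fin N) A) (hP : P * P = P) :
    Matrix.trace (P.map τ) - Matrix.trace P ∈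
      AddSubgroup.closure {x : A | ∃ a b : A, x = a * b - b * a} :=
  trace_invariant_under_automorphism_trivial_mod_t_general A t hcentral hsep hcomplete τ hτ N P hP
end
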